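/- arXiv:math-ph/9805001 — 2 statements merged into one kernel-verified Lean document; each statement's English description precedes it below -/
import Mathlib

section
/- Let v(t,x) and B(t,x) be time-dependent divergence-free C¹ vector fields on I × M ⊆ ℝ × ℝ³. Then B satisfies the frozen-field equation ∂B/∂t − ∇ × (v × B) = 0 if and only if the time-extended vector fields ∂_t + v and B on I × M commute: [∂_t + v, B] = 0. -/
open Matrix

/-- The `i`-th standard basis vector of ℝ³. -/
noncomputable def e (i : Fin 3) : Fin 3 → ℝ := Pi.single i 1

/-- Partial derivative of a scalar function in the `i`-th coordinate direction. -/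
noncomputable def pd (f : (Fin 3 → ℝ) → ℝ) (i : Fin 3) (x : Fin 3 → ℝ) : ℝ :=
  fderiv ℝ f x (e i)

/-- Divergence ∇ ⋅ u of a vector field on ℝ³. -/
noncomputable def div3 (u : (Fin 3 → ℝ) → (Fin 3 → ℝ)) (x : Fin 3 → ℝ) : ℝ :=
  ∑ i, pd (fun y => u y i) i x

/-- Curl ∇ × u of a vector field on ℝ³. -/
noncomputable def curl3 (u : (Fin 3 → ℝ) → (Fin 3 → ℝ)) (x : Fin 3 → ℝ) : Fin 3 → ℝ :=
  ![pd (fun y => u y 2) 1 x - pd (fun y => u y 1) 2 x,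
    pd (fun y => u y 0) 2 x - pd (fun y => u y 2) 0 x,
    pd (fun y => u y 1) 0 x - pd (fun y => u y 0) 1 x]

/-- Time-extended space I × M ⊆ ℝ × ℝ³. -/
abbrev P : Type := ℝ × (Fin 3 → ℝ)

/-- Lie bracket of vector fields on the time-extended space ℝ × ℝ³. -/
noncomputable def lieBracketP (F G : P → P) (p : P) : P :=
  fderiv ℝ G p (F p) - fderiv ℝ F p (G p)

/-! The bracket of the suspended fields `∂ₜ + v` and `B` has no time component and spatial component
`∂ₜB + (v·∇)B − (B·∇)v`. On the other hand `∇ × (v × B) = (∇·B) v − (∇·v) B + (B·∇)v − (v·∇)B`,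
so for divergence-free fields `∂ₜB − ∇ × (v × B)` is that same spatial component. -/

section Space

variable {u w : (Fin 3 → ℝ) → Fin 3 → ℝ} {f g : (Fin 3 → ℝ) → ℝ} {x : Fin 3 → ℝ}

lemma pd_apply_eq_fderiv (hu : DifferentiableAt ℝ u x) (i j : Fin 3) :
    pd (fun y => u y i) j x = fderiv ℝ u x (e j) i := by
  rw [pd, fderiv_pi (differentiableAt_pi.1 hu)]
  rfl

lemma pd_mul (hf : DifferentiableAt ℝ f x) (hg : DifferentiableAt ℝ g x) (j : Fin 3) :
    pd (fun y => f y * g y) j x = pd f j x * g x + f x * pd g j x := by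
  simp only [pd, fderiv_fun_mul hf hg, _root_.add_apply, _root_.smul_apply,
    smul_eq_mul]
  ring

lemma pd_sub (hf : DifferentiableAt ℝ f x) (hg : DifferentiableAt ℝ g x) (j : Fin 3) :
    pd (fun y => f y - g y) j x = pd f j x - pd g j x := by
  simp only [pd, fderiv_fun_sub hf hg, _root_.sub_apply]

lemma fderiv_apply_eq_sum (w : Fin 3 → ℝ) :
    fderiv ℝ u x w = ∑ j, w j • fderiv ℝ u x (e j) := by
  conv_lhs => rw [pi_eq_sum_univ' w]
  simp only [map_sum, map_smul, e]

lemma div3_eq_sum (hu : DifferentiableAt ℝ u x) :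
    div3 u x = ∑ i, fderiv ℝ u x (e i) i := by
  simp only [div3, pd_apply_eq_fderiv hu]

theorem curl3_cross (hu : DifferentiableAt ℝ u x) (hw : DifferentiableAt ℝ w x) :
    curl3 (fun y => u y ⨯₃ w y) x
      = div3 w x • u x - div3 u x • w x + fderiv ℝ u x (w x) - fderiv ℝ w x (u x) := by
  have hu' := differentiableAt_pi.1 hu
  have hw' := differentiableAt_pi.1 hw
  have pd_cross (i j k : Fin 3) : pd (fun y => u y j * w y k - u y k * w y j) i x
      = fderiv ℝ u x (e i) j * w x k + u x j * fderiv ℝ w x (e i) k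
        - (fderiv ℝ u x (e i) k * w x j + u x k * fderiv ℝ w x (e i) j) := by
    rw [pd_sub ((hu' j).fun_mul (hw' k)) ((hu' k).fun_mul (hw' j)), pd_mul (hu' j) (hw' k),
      pd_mul (hu' k) (hw' j), pd_apply_eq_fderiv hu, pd_apply_eq_fderiv hu,
      pd_apply_eq_fderiv hw, pd_apply_eq_fderiv hw]
  rw [div3_eq_sum hu, div3_eq_sum hw, fderiv_apply_eq_sum (w x), fderiv_apply_eq_sum (u x)]
  ext i
  fin_cases i <;>
    simp only [curl3, cross_apply, pd_cross, Fin.sum_univ_three, Fin.isValue, cons_val,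
      cons_val_zero, cons_val_one, Fin.zero_eta, Fin.mk_one, Fin.reduceFinMk, Pi.sub_apply,
      Pi.add_apply, Pi.smul_apply, smul_eq_mul] <;> ring

end Space

section Spacetime

variable {u v B : P → Fin 3 → ℝ} {p : P}

lemma hasFDerivAt_slice (hu : DifferentiableAt ℝ u p) :
    HasFDerivAt (fun y => u (p.1, y))
      ((fderiv ℝ u p).comp (ContinuousLinearMap.inr ℝ ℝ (Fin 3 → ℝ))) p.2 :=
  hu.hasFDerivAt.comp p.2 (hasFDerivAt_prodMk_right p.1 p.2)

lemma differentiableAt_slice (hu : DifferentiableAt ℝ u p) :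
    DifferentiableAt ℝ (fun y => u (p.1, y)) p.2 :=
  (hasFDerivAt_slice hu).differentiableAt

lemma fderiv_slice_apply (hu : DifferentiableAt ℝ u p) (w : Fin 3 → ℝ) :
    fderiv ℝ (fun y => u (p.1, y)) p.2 w = fderiv ℝ u p (0, w) := by
  rw [(hasFDerivAt_slice hu).fderiv]
  rfl

lemma deriv_time_slice (hu : DifferentiableAt ℝ u p) :
    deriv (fun t => u (t, p.2)) p.1 = fderiv ℝ u p (1, 0) :=
  (hu.hasFDerivAt.comp_hasDerivAt p.1
    ((hasDerivAt_id p.1).prodMk (hasDerivAt_const p.1 p.2))).deriv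

theorem lieBracketP_suspension (hv : DifferentiableAt ℝ v p) (hB : DifferentiableAt ℝ B p) :
    lieBracketP (fun q => (1, v q)) (fun q => (0, B q)) p
      = (0, deriv (fun t => B (t, p.2)) p.1 + fderiv ℝ (fun y => B (p.1, y)) p.2 (v p)
          - fderiv ℝ (fun y => v (p.1, y)) p.2 (B p)) := by
  have hF : HasFDerivAt (fun q => ((1 : ℝ), v q)) ((0 : P →L[ℝ] ℝ).prod (fderiv ℝ v p)) p :=
    (hasFDerivAt_const 1 p).prodMk hv.hasFDerivAt
  have hG : HasFDerivAt (fun q => ((0 : ℝ), B q)) ((0 : P →L[ℝ] ℝ).prod (fderiv ℝ B p)) p :=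
    (hasFDerivAt_const 0 p).prodMk hB.hasFDerivAt
  have hsplit : ((1 : ℝ), v p) = (1, 0) + (0, v p) := by simp
  rw [lieBracketP, hF.fderiv, hG.fderiv, deriv_time_slice hB, fderiv_slice_apply hB,
    fderiv_slice_apply hv]
  simp only [ContinuousLinearMap.prod_apply, _root_.zero_apply, Prod.mk_sub_mk, sub_self]
  rw [hsplit, map_add]

end Spacetime

/-- For time-dependent divergence-free C¹ fields v, B on an open S ⊆ ℝ × ℝ³, the frozen-field
equation ∂B/∂t − ∇ × (v × B) = 0 holds iff the suspended fields ∂ₜ + v and B commute. -/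
theorem frozenField_iff_commute (S : Set P) (hS : IsOpen S)
    (v B : P → (Fin 3 → ℝ))
    (hv : ContDiffOn ℝ 1 v S) (hB : ContDiffOn ℝ 1 B S)
    (hdv : ∀ p ∈ S, div3 (fun y => v (p.1, y)) p.2 = 0)
    (hdB : ∀ p ∈ S, div3 (fun y => B (p.1, y)) p.2 = 0) :
    ∀ p ∈ S,
      (deriv (fun t => B (t, p.2)) p.1 -
          curl3 (fun y => v (p.1, y) ⨯₃ B (p.1, y)) p.2 = 0
        ↔ lieBracketP (fun q => (1, v q)) (fun q => (0, B q)) p = 0) := by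
  intro p hp
  have hvp := (hv.differentiableOn one_ne_zero).differentiableAt (hS.mem_nhds hp)
  have hBp := (hB.differentiableOn one_ne_zero).differentiableAt (hS.mem_nhds hp)
  rw [lieBracketP_suspension hvp hBp, Prod.mk_eq_zero,
    curl3_cross (differentiableAt_slice hvp) (differentiableAt_slice hBp), hdv p hp, hdB p hp]
  simp only [zero_smul, sub_self, zero_add, sub_sub_eq_add_sub, true_and]
end

section
/- The bracket {f, g}_φ = ρ⁻¹ ∇φ ⋅ (∇f × ∇g) on smooth functions on an open set M ⊆ ℝ³ (with φ smooth and ρ = −B ⋅ ∇φ for a divergence-free B, or more generally ρ nonvanishing with appropriate compatibility) satisfies the Jacobi identity when ρ⁻¹∇φ × ∇f generates Hamiltonian fields of the symplectic form on I×M; in particular, for the choice ρ ≡ 1, the bracket {f,g} = ∇φ ⋅ (∇f × ∇g) satisfies the Jacobi identity {{f,g},h} + {{g,h},f} + {{h,f},g} = 0 for all smooth f, g, h. -/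
open Matrix

/-- Gradient of a scalar function on ℝ³. -/
noncomputable def grad (f : (Fin 3 → ℝ) → ℝ) (x : Fin 3 → ℝ) : Fin 3 → ℝ :=
  fun i => fderiv ℝ f x (e i)

/-- The bracket {f,g} = ∇φ ⋅ (∇f × ∇g) (the case ρ ≡ 1). -/
noncomputable def nambuBracket (φ f g : (Fin 3 → ℝ) → ℝ) (x : Fin 3 → ℝ) : ℝ :=
  grad φ x ⬝ᵥ (grad f x ⨯₃ grad g x)

lemma hasFDerivAt_partial (F : (Fin 3 → ℝ) → ℝ) (hF : ContDiff ℝ (⊤ : ℕ∞) F)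
    (x : Fin 3 → ℝ) (i : Fin 3) :
    HasFDerivAt (fun y => fderiv ℝ F y (e i))
      ((fderiv ℝ (fderiv ℝ F) x).flip (e i)) x := by
  have h1 : HasFDerivAt (fderiv ℝ F) (fderiv ℝ (fderiv ℝ F) x) x :=
    ((hF.fderiv_right (m := 1) (by exact WithTop.coe_le_coe.mpr le_top)).differentiable one_ne_zero x).hasFDerivAt
  have := h1.clm_apply (hasFDerivAt_const (e i) x)
  simpa using this

lemma second_symm (F : (Fin 3 → ℝ) → ℝ) (hF : ContDiff ℝ (⊤ : ℕ∞) F)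
    (x : Fin 3 → ℝ) (i j : Fin 3) :
    fderiv ℝ (fderiv ℝ F) x (e i) (e j) = fderiv ℝ (fderiv ℝ F) x (e j) (e i) := by
  have h1 : ∀ y, HasFDerivAt F (fderiv ℝ F y) y := fun y =>
    (hF.differentiable (by simp) y).hasFDerivAt
  have h2 : HasFDerivAt (fderiv ℝ F) (fderiv ℝ (fderiv ℝ F) x) x :=
    ((hF.fderiv_right (m := 1) (by exact WithTop.coe_le_coe.mpr le_top)).differentiable one_ne_zero x).hasFDerivAt
  exact second_derivative_symmetric h1 h2 _ _

lemma grad_nambu (φ f g : (Fin 3 → ℝ) → ℝ)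
    (hφ : ContDiff ℝ (⊤ : ℕ∞) φ) (hf : ContDiff ℝ (⊤ : ℕ∞) f) (hg : ContDiff ℝ (⊤ : ℕ∞) g)
    (x : Fin 3 → ℝ) (j : Fin 3) :
    grad (nambuBracket φ f g) x j =
      fderiv ℝ (fderiv ℝ φ) x (e j) (e 0) *
        (fderiv ℝ f x (e 1) * fderiv ℝ g x (e 2) - fderiv ℝ f x (e 2) * fderiv ℝ g x (e 1)) +
      fderiv ℝ (fderiv ℝ φ) x (e j) (e 1) *
        (fderiv ℝ f x (e 2) * fderiv ℝ g x (e 0) - fderiv ℝ f x (e 0) * fderiv ℝ g x (e 2)) +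
      fderiv ℝ (fderiv ℝ φ) x (e j) (e 2) *
        (fderiv ℝ f x (e 0) * fderiv ℝ g x (e 1) - fderiv ℝ f x (e 1) * fderiv ℝ g x (e 0)) +
      fderiv ℝ φ x (e 0) *
        (fderiv ℝ (fderiv ℝ f) x (e j) (e 1) * fderiv ℝ g x (e 2) +
         fderiv ℝ f x (e 1) * fderiv ℝ (fderiv ℝ g) x (e j) (e 2) -
         fderiv ℝ (fderiv ℝ f) x (e j) (e 2) * fderiv ℝ g x (e 1) -
         fderiv ℝ f x (e 2) * fderiv ℝ (fderiv ℝ g) x (e j) (e 1)) +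
      fderiv ℝ φ x (e 1) *
        (fderiv ℝ (fderiv ℝ f) x (e j) (e 2) * fderiv ℝ g x (e 0) +
         fderiv ℝ f x (e 2) * fderiv ℝ (fderiv ℝ g) x (e j) (e 0) -
         fderiv ℝ (fderiv ℝ f) x (e j) (e 0) * fderiv ℝ g x (e 2) -
         fderiv ℝ f x (e 0) * fderiv ℝ (fderiv ℝ g) x (e j) (e 2)) +
      fderiv ℝ φ x (e 2) *
        (fderiv ℝ (fderiv ℝ f) x (e j) (e 0) * fderiv ℝ g x (e 1) +
         fderiv ℝ f x (e 0) * fderiv ℝ (fderiv ℝ g) x (e j) (e 1) -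
         fderiv ℝ (fderiv ℝ f) x (e j) (e 1) * fderiv ℝ g x (e 0) -
         fderiv ℝ f x (e 1) * fderiv ℝ (fderiv ℝ g) x (e j) (e 0)) := by
  have Hφ := hasFDerivAt_partial φ hφ x
  have Hf := hasFDerivAt_partial f hf x
  have Hg := hasFDerivAt_partial g hg x
  have heq : nambuBracket φ f g = fun y =>
      fderiv ℝ φ y (e 0) * (fderiv ℝ f y (e 1) * fderiv ℝ g y (e 2) -
        fderiv ℝ f y (e 2) * fderiv ℝ g y (e 1)) +
      fderiv ℝ φ y (e 1) * (fderiv ℝ f y (e 2) * fderiv ℝ g y (e 0) -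
        fderiv ℝ f y (e 0) * fderiv ℝ g y (e 2)) +
      fderiv ℝ φ y (e 2) * (fderiv ℝ f y (e 0) * fderiv ℝ g y (e 1) -
        fderiv ℝ f y (e 1) * fderiv ℝ g y (e 0)) := by
    funext y
    simp [nambuBracket, grad, dotProduct, Fin.sum_univ_three, cross_apply]
  have H := (((Hφ 0).mul (((Hf 1).mul (Hg 2)).sub ((Hf 2).mul (Hg 1)))).add
      ((Hφ 1).mul (((Hf 2).mul (Hg 0)).sub ((Hf 0).mul (Hg 2))))).add
      ((Hφ 2).mul (((Hf 0).mul (Hg 1)).sub ((Hf 1).mul (Hg 0))))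
  beta_reduce at H
  simp only [Pi.mul_def, Pi.add_def, Pi.sub_def] at H
  rw [← heq] at H
  simp only [grad]
  rw [H.fderiv]
  simp only [ContinuousLinearMap.add_apply, ContinuousLinearMap.sub_apply,
    ContinuousLinearMap.smul_apply, ContinuousLinearMap.flip_apply, smul_eq_mul]
  ring

set_option maxHeartbeats 4000000 in
/-- The bracket {f,g} = ∇φ ⋅ (∇f × ∇g) on smooth functions on ℝ³ satisfies the
Jacobi identity {{f,g},h} + {{g,h},f} + {{h,f},g} = 0. -/
theorem nambuBracket_jacobi
    (φ f g h : (Fin 3 → ℝ) → ℝ)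
    (hφ : ContDiff ℝ (⊤ : ℕ∞) φ) (hf : ContDiff ℝ (⊤ : ℕ∞) f)
    (hg : ContDiff ℝ (⊤ : ℕ∞) g) (hh : ContDiff ℝ (⊤ : ℕ∞) h) :
    ∀ x, nambuBracket φ (nambuBracket φ f g) h x +
      nambuBracket φ (nambuBracket φ g h) f x +
      nambuBracket φ (nambuBracket φ h f) g x = 0 := by
  intro x
  have e1 : nambuBracket φ (nambuBracket φ f g) h x =
      grad φ x 0 * (grad (nambuBracket φ f g) x 1 * grad h x 2 -
        grad (nambuBracket φ f g) x 2 * grad h x 1) +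
      grad φ x 1 * (grad (nambuBracket φ f g) x 2 * grad h x 0 -
        grad (nambuBracket φ f g) x 0 * grad h x 2) +
      grad φ x 2 * (grad (nambuBracket φ f g) x 0 * grad h x 1 -
        grad (nambuBracket φ f g) x 1 * grad h x 0) := by
    simp [nambuBracket, dotProduct, Fin.sum_univ_three, cross_apply]
  have e2 : nambuBracket φ (nambuBracket φ g h) f x =
      grad φ x 0 * (grad (nambuBracket φ g h) x 1 * grad f x 2 -
        grad (nambuBracket φ g h) x 2 * grad f x 1) +
      grad φ x 1 * (grad (nambuBracket φ g h) x 2 * grad f x 0 -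
        grad (nambuBracket φ g h) x 0 * grad f x 2) +
      grad φ x 2 * (grad (nambuBracket φ g h) x 0 * grad f x 1 -
        grad (nambuBracket φ g h) x 1 * grad f x 0) := by
    simp [nambuBracket, dotProduct, Fin.sum_univ_three, cross_apply]
  have e3 : nambuBracket φ (nambuBracket φ h f) g x =
      grad φ x 0 * (grad (nambuBracket φ h f) x 1 * grad g x 2 -
        grad (nambuBracket φ h f) x 2 * grad g x 1) +
      grad φ x 1 * (grad (nambuBracket φ h f) x 2 * grad g x 0 -
        grad (nambuBracket φ h f) x 0 * grad g x 2) +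
      grad φ x 2 * (grad (nambuBracket φ h f) x 0 * grad g x 1 -
        grad (nambuBracket φ h f) x 1 * grad g x 0) := by
    simp [nambuBracket, dotProduct, Fin.sum_univ_three, cross_apply]
  rw [e1, e2, e3]
  simp only [grad_nambu φ f g hφ hf hg x, grad_nambu φ g h hφ hg hh x,
    grad_nambu φ h f hφ hh hf x]
  simp only [grad]
  rw [second_symm φ hφ x 1 0, second_symm φ hφ x 2 0, second_symm φ hφ x 2 1,
    second_symm f hf x 1 0, second_symm f hf x 2 0, second_symm f hf x 2 1,
    second_symm g hg x 1 0, second_symm g hg x 2 0, second_symm g hg x 2 1,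
    second_symm h hh x 1 0, second_symm h hh x 2 0, second_symm h hh x 2 1]
  ring
end
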